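/- arXiv:1107.5973 — 2 statements merged into one kernel-verified Lean document; each statement's English description precedes it below -/
import Mathlib

section
/- Let G be a group and S, T, U nonempty subsets of G. If (S, T, U) is a TPP triple, then for every permutation π of the three sets, the permuted triple is also a TPP triple; in particular both (T, U, S) and (T, S, U) are TPP triples. -/
/-! A product `s * t * u = 1` is invariant under cyclic rotation of its factors, and inverting it
reverses their order while keeping each factor in its right quotient (`Q(X)` is closed under
inversion). Rotation and reversal generate all permutations of three sets. -/

open Pointwise

/-- The right quotient `Q(X) = {x y⁻¹ : x, y ∈ X}` of a subset of a group. -/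
def rightQuotient {G : Type*} [Group G] (X : Set G) : Set G :=
  {g | ∃ x ∈ X, ∃ y ∈ X, g = x * y⁻¹}

/-- Subsets `S, T, U` of a group satisfy the Triple Product Property if for all
`s ∈ Q(S)`, `t ∈ Q(T)`, `u ∈ Q(U)`, `s * t * u = 1` iff `s = t = u = 1`. -/
def TPP {G : Type*} [Group G] (S T U : Set G) : Prop :=
  ∀ s ∈ rightQuotient S, ∀ t ∈ rightQuotient T, ∀ u ∈ rightQuotient U,
    (s * t * u = 1 ↔ s = 1 ∧ t = 1 ∧ u = 1)

section

variable {G : Type*} [Group G]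

lemma inv_mem_rightQuotient {X : Set G} {g : G} (hg : g ∈ rightQuotient X) :
    g⁻¹ ∈ rightQuotient X := by
  obtain ⟨x, hx, y, hy, rfl⟩ := hg
  exact ⟨y, hy, x, hx, by group⟩

lemma mul_mul_eq_one_rotate {s t u : G} : t * u * s = 1 ↔ s * t * u = 1 := by
  rw [mul_eq_one_comm, mul_assoc]

lemma mul_mul_eq_one_reverse {s t u : G} : u * t * s = 1 ↔ s⁻¹ * t⁻¹ * u⁻¹ = 1 := by
  rw [← inv_eq_one, mul_inv_rev, mul_inv_rev, mul_assoc]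

variable {S T U : Set G}

lemma TPP.rotate (h : TPP S T U) : TPP T U S := by
  intro t ht u hu s hs
  rw [mul_mul_eq_one_rotate, h s hs t ht u hu]
  tauto

lemma TPP.reverse (h : TPP S T U) : TPP U T S := by
  intro u hu t ht s hs
  rw [mul_mul_eq_one_reverse, h _ (inv_mem_rightQuotient hs) _ (inv_mem_rightQuotient ht) _
    (inv_mem_rightQuotient hu), inv_eq_one, inv_eq_one, inv_eq_one]
  tauto

end

theorem stmt_8_general {G : Type*} [Group G] (f : Fin 3 → Set G)
    (h : TPP (f 0) (f 1) (f 2)) :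
    (∀ π : Equiv.Perm (Fin 3), TPP (f (π 0)) (f (π 1)) (f (π 2))) ∧
      TPP (f 1) (f 2) (f 0) ∧ TPP (f 1) (f 0) (f 2) := by
  have h120 := h.rotate
  have h201 := h120.rotate
  have h210 := h.reverse
  have h102 := h210.rotate
  have h021 := h102.rotate
  refine ⟨fun π => ?_, h120, h102⟩
  fin_cases π <;> assumption

theorem stmt_8 {G : Type*} [Group G] (f : Fin 3 → Set G)
    (hne : ∀ i, (f i).Nonempty) (h : TPP (f 0) (f 1) (f 2)) :
    (∀ π : Equiv.Perm (Fin 3), TPP (f (π 0)) (f (π 1)) (f (π 2))) ∧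
      TPP (f 1) (f 2) (f 0) ∧ TPP (f 1) (f 0) (f 2) :=
  stmt_8_general f h
end

section
/- Let G be a group, let S, T, U be subgroups of G forming a TPP triple (regarded as subsets), and let c ∈ G with c ∉ S. Then (S ∪ {c}, T, U) is a TPP triple if and only if cS ∩ TU = ∅ and Sc⁻¹ ∩ TU = ∅, where cS = {cx : x ∈ S}, Sc⁻¹ = {xc⁻¹ : x ∈ S}, and TU = {tu : t ∈ T, u ∈ U}. -/
open Pointwise

/-!
For subgroups `T, U`, a product `s t u` with `t ∈ T`, `u ∈ U` is `1` exactly when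
`s⁻¹ = t u ∈ TU`. Since `(S, T, U)` already has the TPP, enlarging `S` to `S ∪ {c}` preserves it
iff no new quotient `s ∈ Q(S ∪ {c}) \ S` has `s⁻¹ ∈ TU`. The new quotients are
`Q(S ∪ {c}) \ S = cS ∪ Sc⁻¹` (disjoint from `S` as `c ∉ S`), and inversion swaps `cS` and `Sc⁻¹`.
-/

section RightQuotient

variable {G : Type*} [Group G]

lemma one_mem_rightQuotient {X : Set G} (hX : X.Nonempty) : (1 : G) ∈ rightQuotient X := by
  obtain ⟨x, hx⟩ := hX
  exact ⟨x, hx, x, hx, (mul_inv_cancel x).symm⟩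

@[simp]
lemma rightQuotient_subgroup (S : Subgroup G) : rightQuotient (S : Set G) = S := by
  ext g
  constructor
  · rintro ⟨x, hx, y, hy, rfl⟩
    exact mul_mem hx (inv_mem hy)
  · intro hg
    exact ⟨g, hg, 1, one_mem S, by rw [inv_one, mul_one]⟩

lemma rightQuotient_subgroup_union_singleton (S : Subgroup G) (c : G) :
    rightQuotient ((S : Set G) ∪ {c}) =
      (S : Set G) ∪ (fun x => c * x) '' S ∪ (fun x => x * c⁻¹) '' S := by
  ext g
  simp only [rightQuotient, Set.mem_union, Set.mem_singleton_iff, Set.mem_image,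
    Set.mem_ofPred_eq, SetLike.mem_coe]
  constructor
  · rintro ⟨x, hx | rfl, y, hy | rfl, rfl⟩
    · exact .inl (.inl (mul_mem hx (inv_mem hy)))
    · exact .inr ⟨x, hx, rfl⟩
    · exact .inl (.inr ⟨y⁻¹, inv_mem hy, rfl⟩)
    · exact .inl (.inl (by rw [mul_inv_cancel]; exact one_mem S))
  · rintro ((hg | ⟨x, hx, rfl⟩) | ⟨x, hx, rfl⟩)
    · exact ⟨g, .inl hg, 1, .inl (one_mem S), by rw [inv_one, mul_one]⟩
    · exact ⟨c, .inr rfl, x⁻¹, .inl (inv_mem hx), by rw [inv_inv]⟩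
    · exact ⟨x, .inl hx, c, .inr rfl, rfl⟩

end RightQuotient

namespace TPP

variable {G : Type*} [Group G] {A B T U : Set G}

lemma eq_one_of_inv_eq_mul (h : TPP A T U) {s t u : G} (hs : s ∈ rightQuotient A)
    (ht : t ∈ rightQuotient T) (hu : u ∈ rightQuotient U) (hstu : s⁻¹ = t * u) : s = 1 :=
  ((h s hs t ht u hu).mp (by rw [mul_assoc, ← hstu, mul_inv_cancel])).1

theorem iff_forall_notMem_rightQuotient (h : TPP A T U) (hA : A.Nonempty) :
    TPP B T U ↔ ∀ s ∈ rightQuotient B, s ∉ rightQuotient A →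
      s⁻¹ ∉ rightQuotient T * rightQuotient U := by
  constructor
  · rintro hB s hsB hsA ⟨t, ht, u, hu, htu⟩
    exact hsA (hB.eq_one_of_inv_eq_mul hsB ht hu htu.symm ▸ one_mem_rightQuotient hA)
  · intro hnew s hs t ht u hu
    refine ⟨fun hstu => ?_, fun ⟨hs1, ht1, hu1⟩ => by rw [hs1, ht1, hu1, mul_one, mul_one]⟩
    by_cases hsA : s ∈ rightQuotient A
    · exact (h s hsA t ht u hu).mp hstu
    · have hinv : t * u = s⁻¹ := eq_inv_of_mul_eq_one_right (by rwa [← mul_assoc])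
      exact absurd ⟨t, ht, u, hu, hinv⟩ (hnew s hs hsA)

end TPP

theorem stmt_14 {G : Type*} [Group G] (S T U : Subgroup G)
    (h : TPP (S : Set G) (T : Set G) (U : Set G)) (c : G) (hc : c ∉ S) :
    TPP ((S : Set G) ∪ {c}) (T : Set G) (U : Set G) ↔
      ((fun x => c * x) '' (S : Set G) ∩ ((T : Set G) * (U : Set G)) = ∅ ∧
        (fun x => x * c⁻¹) '' (S : Set G) ∩ ((T : Set G) * (U : Set G)) = ∅) := by
  rw [h.iff_forall_notMem_rightQuotient ⟨1, S.one_mem⟩, rightQuotient_subgroup_union_singleton]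
  simp only [rightQuotient_subgroup, Set.eq_empty_iff_forall_notMem]
  constructor
  · intro hnew
    constructor
    · rintro _ ⟨⟨x, hx, rfl⟩, htu⟩
      have hnotS : x⁻¹ * c⁻¹ ∉ S := fun hS => hc (inv_mem_iff.mp (by simpa using mul_mem hx hS))
      exact hnew _ (.inr ⟨x⁻¹, inv_mem hx, rfl⟩) hnotS (by rwa [mul_inv_rev, inv_inv, inv_inv])
    · rintro _ ⟨⟨x, hx, rfl⟩, htu⟩
      have hnotS : c * x⁻¹ ∉ S := fun hS => hc (by simpa using mul_mem hS hx)
      exact hnew _ (.inl (.inr ⟨x⁻¹, inv_mem hx, rfl⟩)) hnotS (by rwa [mul_inv_rev, inv_inv])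
  · rintro ⟨hcS, hSc⟩ s ((hs | ⟨x, hx, rfl⟩) | ⟨x, hx, rfl⟩) hsS htu
    · exact hsS hs
    · exact hSc _ ⟨⟨x⁻¹, inv_mem hx, (mul_inv_rev c x).symm⟩, htu⟩
    · exact hcS _ ⟨⟨x⁻¹, inv_mem hx, by rw [mul_inv_rev, inv_inv]⟩, htu⟩
end
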